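/- In the hierarchical setup, assume that d(x, g_l(x)) ≤ 2^l for all x ∈ X, that d(g_i(x), g_{i+1}(x)) ≤ 2^{i+1} for all x ∈ X and all l ≤ i < r, and that g_r is a constant map. Then for all probability distributions p and q on X, W_d(p,q) ≤ 2^l·‖p−q‖₁ + Σ_{i=l}^{r−1} 2^{i+1}·‖g_i♯p − g_i♯q‖₁. -/

import Mathlib

/-- `p` is a probability distribution on the finite set `X`. -/
def IsProb {X : Type*} [Fintype X] (p : X → ℝ) : Prop :=
  (∀ x, 0 ≤ p x) ∧ ∑ x, p x = 1

/-- `M` is a coupling of `p` and `q`: a probability distribution on `X × X`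
whose first marginal is `p` and second marginal is `q`. -/
def IsCoupling {X : Type*} [Fintype X] (p q : X → ℝ) (M : X × X → ℝ) : Prop :=
  (∀ z, 0 ≤ M z) ∧ (∀ x, ∑ y, M (x, y) = p x) ∧ (∀ y, ∑ x, M (x, y) = q y)

/-- The Wasserstein (transportation) distance between `p` and `q` with respect to the
cost function `c`: the infimum, over all couplings `M` of `p` and `q`, of the expected cost. -/
noncomputable def wassersteinDist {X : Type*} [Fintype X] (c : X → X → ℝ) (p q : X → ℝ) : ℝ :=
  sInf {w : ℝ | ∃ M : X × X → ℝ, IsCoupling p q M ∧ w = ∑ z : X × X, M z * c z.1 z.2}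

/-- The `L₁` distance between two distributions on a finite set. -/
noncomputable def l1Dist {X : Type*} [Fintype X] (p q : X → ℝ) : ℝ :=
  ∑ x, |p x - q x|

/-- The pushforward of the distribution `p` along the map `g`. -/
noncomputable def pushforward {X : Type*} [Fintype X] [DecidableEq X]
    (g : X → X) (p : X → ℝ) : X → ℝ :=
  fun z => ∑ x ∈ Finset.univ.filter (fun x => g x = z), p x

/-- The tree metric associated with the hierarchical family of maps `g i`, levels
`l ≤ i ≤ r`: `d_T x x = 0` and, for `x ≠ y`,
`d_T x y = 2^(l+1) + ∑_{i=l}^{r-1} 2^(i+2) · 1[g i x ≠ g i y]`. -/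
noncomputable def treeDist {X : Type*} [DecidableEq X] (l r : ℤ) (g : ℤ → X → X)
    (x y : X) : ℝ :=
  if x = y then 0
  else (2 : ℝ) ^ (l + 1) +
    ∑ i ∈ Finset.Icc l (r - 1), if g i x ≠ g i y then (2 : ℝ) ^ (i + 2) else 0

/-!
Write `D = p - q`. Cancelling the common mass `min p q` reduces `W(p, q)` to transporting
`D⁺` onto `D⁻`. Moving both along `g_l` costs at most `2^l · ‖D‖₁` and leaves the task of
transporting `(g_l♯D)⁺` onto `(g_l♯D)⁻`, which is the same problem one level up: on the range of
`g_i` the map `π_{i+1}` moves points by at most `2^(i+1)`, so level `i` costs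
`2^(i+1) · ‖g_i♯D‖₁`. At level `r` nothing is left, since `g_r` is constant and `D` has total
mass `0`. The three transports of each level are composed by gluing couplings.
-/

open Finset

section Pushforward

variable {X : Type*} [Fintype X] [DecidableEq X]

lemma pushforward_id (u : X → ℝ) : pushforward id u = u := by
  funext z
  simp [pushforward, sum_filter]

lemma pushforward_comp (f g : X → X) (u : X → ℝ) :
    pushforward (f ∘ g) u = pushforward f (pushforward g u) := by
  funext z
  simp only [pushforward, Function.comp_apply]
  rw [← sum_fiberwise_of_maps_to (g := g) (t := univ.filter (fun y => f y = z))
    (fun x hx => by simpa using hx)]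
  refine sum_congr rfl fun y hy => sum_congr ?_ fun _ _ => rfl
  ext x
  simp only [mem_filter, mem_univ, true_and, and_iff_right_iff_imp]
  rintro rfl
  simpa using hy

lemma pushforward_sub (g : X → X) (u v : X → ℝ) :
    pushforward g (u - v) = pushforward g u - pushforward g v := by
  funext z
  simp [pushforward, sum_sub_distrib]

lemma pushforward_nonneg (g : X → X) {u : X → ℝ} (hu : 0 ≤ u) : 0 ≤ pushforward g u :=
  fun _ => sum_nonneg fun x _ => hu x

lemma exists_apply_eq_of_pushforward_ne_zero {g : X → X} {u : X → ℝ} {z : X}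
    (h : pushforward g u z ≠ 0) : ∃ x, g x = z := by
  obtain ⟨x, hx, -⟩ := exists_ne_zero_of_sum_ne_zero h
  exact ⟨x, (mem_filter.1 hx).2⟩

lemma pushforward_eq_zero_of_forall_eq {g : X → X} {z : X} (hg : ∀ x, g x = z) {u : X → ℝ}
    (hu : ∑ x, u x = 0) : pushforward g u = 0 := by
  funext y
  by_cases hy : z = y <;> simp [pushforward, hg, hy, hu]

end Pushforward

section Transport

variable {X : Type*} [Fintype X] {u v w : X → ℝ} {a b c : ℝ}

lemma IsCoupling.sum_mul_div_right {M N : X × X → ℝ} (hM : IsCoupling u v M)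
    (hN : IsCoupling v w N) (x y : X) : ∑ z, M (x, y) * N (y, z) / v y = M (x, y) := by
  rw [← sum_div, ← mul_sum, hN.2.1]
  rcases eq_or_ne (v y) 0 with hy | hy
  · rw [hy, div_zero, eq_comm]
    exact (sum_eq_zero_iff_of_nonneg fun x' _ => hM.1 (x', y)).1 (hy ▸ hM.2.2 y) x (mem_univ x)
  · exact mul_div_cancel_right₀ _ hy

lemma IsCoupling.sum_mul_div_left {M N : X × X → ℝ} (hM : IsCoupling u v M)
    (hN : IsCoupling v w N) (y z : X) : ∑ x, M (x, y) * N (y, z) / v y = N (y, z) := by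
  rw [← sum_div, ← sum_mul, hM.2.2]
  rcases eq_or_ne (v y) 0 with hy | hy
  · rw [hy, div_zero, eq_comm]
    exact (sum_eq_zero_iff_of_nonneg fun z' _ => hN.1 (y, z')).1 (hy ▸ hN.2.1 y) z (mem_univ z)
  · exact mul_div_cancel_left₀ _ hy

variable [PseudoMetricSpace X]

def transportCost (M : X × X → ℝ) : ℝ :=
  ∑ z, M z * dist z.1 z.2

def CanTransport (u v : X → ℝ) (c : ℝ) : Prop :=
  ∃ M, IsCoupling u v M ∧ transportCost M ≤ c

lemma wassersteinDist_le_of_canTransport (h : CanTransport u v c) :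
    wassersteinDist (fun x y => dist x y) u v ≤ c := by
  obtain ⟨M, hM, hMc⟩ := h
  refine le_trans (csInf_le ?_ ⟨M, hM, rfl⟩) hMc
  refine ⟨0, ?_⟩
  rintro _ ⟨N, hN, rfl⟩
  exact sum_nonneg fun z _ => mul_nonneg (hN.1 z) dist_nonneg

lemma CanTransport.mono (h : CanTransport u v c) (hc : c ≤ b) : CanTransport u v b := by
  obtain ⟨M, hM, hMc⟩ := h
  exact ⟨M, hM, hMc.trans hc⟩

lemma CanTransport.add {u' v' : X → ℝ} (h : CanTransport u v a) (h' : CanTransport u' v' b) :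
    CanTransport (u + u') (v + v') (a + b) := by
  obtain ⟨M, ⟨hM₀, hM₁, hM₂⟩, hMc⟩ := h
  obtain ⟨N, ⟨hN₀, hN₁, hN₂⟩, hNc⟩ := h'
  refine ⟨M + N, ⟨fun z => add_nonneg (hM₀ z) (hN₀ z), fun x => ?_, fun y => ?_⟩, ?_⟩
  · simp [sum_add_distrib, hM₁, hN₁]
  · simp [sum_add_distrib, hM₂, hN₂]
  · simpa [transportCost, add_mul, sum_add_distrib] using add_le_add hMc hNc

lemma canTransport_pushforward_pushforward [DecidableEq X] (f g : X → X) (hu : 0 ≤ u)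
    (hfg : ∀ x, u x ≠ 0 → dist (f x) (g x) ≤ a) :
    CanTransport (pushforward f u) (pushforward g u) (a * ∑ x, u x) := by
  classical
  refine ⟨fun z => ∑ x, if (f x, g x) = z then u x else 0, ⟨?_, fun y => ?_, fun y => ?_⟩, ?_⟩
  · exact fun z => sum_nonneg fun x _ => ite_nonneg (hu x) le_rfl
  · rw [sum_comm]
    simp [pushforward, sum_filter, Prod.ext_iff, ite_and]
  · rw [sum_comm]
    simp [pushforward, sum_filter, Prod.ext_iff, ite_and]
  · calc transportCost _ = ∑ x, u x * dist (f x) (g x) := by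
          simp only [transportCost, sum_mul, ite_mul, zero_mul]
          rw [sum_comm]
          simp
      _ ≤ ∑ x, u x * a := by
          refine sum_le_sum fun x _ => ?_
          rcases eq_or_ne (u x) 0 with hx | hx
          · simp [hx]
          · exact mul_le_mul_of_nonneg_left (hfg x hx) (hu x)
      _ = a * ∑ x, u x := by rw [← sum_mul, mul_comm]

lemma canTransport_self (hu : 0 ≤ u) : CanTransport u u 0 := by
  classical
  simpa [pushforward_id] using canTransport_pushforward_pushforward (a := 0) id id hu (by simp)

lemma CanTransport.trans (h₁ : CanTransport u v a) (h₂ : CanTransport v w b) :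
    CanTransport u w (a + b) := by
  obtain ⟨M, hM, hMc⟩ := h₁
  obtain ⟨N, hN, hNc⟩ := h₂
  have hv : 0 ≤ v := fun y => hM.2.2 y ▸ sum_nonneg fun x _ => hM.1 (x, y)
  -- `E x y z` is the mass sent from `x` through `y` to `z`
  set E : X → X → X → ℝ := fun x y z => M (x, y) * N (y, z) / v y
  have hE : ∀ x y z, 0 ≤ E x y z := fun x y z =>
    div_nonneg (mul_nonneg (hM.1 _) (hN.1 _)) (hv y)
  refine ⟨fun z => ∑ y, E z.1 y z.2,
    ⟨fun z => sum_nonneg fun y _ => hE _ _ _, fun x => ?_, fun z => ?_⟩, ?_⟩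
  · rw [sum_comm]
    simp only [E, hM.sum_mul_div_right hN, hM.2.1]
  · rw [sum_comm]
    simp only [E, hM.sum_mul_div_left hN, hN.2.2]
  calc transportCost (fun z => ∑ y, E z.1 y z.2)
      = ∑ x, ∑ y, ∑ z, E x y z * dist x z := by
        simp only [transportCost, Fintype.sum_prod_type, sum_mul]
        exact sum_congr rfl fun x _ => sum_comm
    _ ≤ ∑ x, ∑ y, ∑ z, (E x y z * dist x y + E x y z * dist y z) := by
        gcongr with x _ y _ z _
        rw [← mul_add]
        exact mul_le_mul_of_nonneg_left (dist_triangle x y z) (hE x y z)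
    _ = transportCost M + transportCost N := by
        simp only [sum_add_distrib, ← sum_mul, transportCost, Fintype.sum_prod_type]
        congr 1
        · simp only [E, hM.sum_mul_div_right hN]
        · rw [sum_comm]
          refine sum_congr rfl fun y _ => ?_
          rw [sum_comm]
          simp only [← sum_mul, E, hM.sum_mul_div_left hN]
    _ ≤ a + b := add_le_add hMc hNc

lemma CanTransport.of_posPart_sub {u v : X → ℝ} (hu : 0 ≤ u) (hv : 0 ≤ v)
    (h : CanTransport (u - v)⁺ (u - v)⁻ c) : CanTransport u v c := by
  have hu_eq : (u - v)⁺ + u ⊓ v = u := by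
    rw [inf_eq_sub_posPart_sub, add_sub_cancel]
  have hv_eq : (u - v)⁻ + u ⊓ v = v := by
    rw [inf_comm, inf_eq_sub_posPart_sub, ← neg_sub, negPart_neg, add_sub_cancel]
  simpa [hu_eq, hv_eq] using h.add (canTransport_self (le_inf hu hv))

end Transport

section Hierarchy

variable {X : Type*} [Fintype X] [DecidableEq X] [PseudoMetricSpace X]

lemma CanTransport.of_pushforward {a c : ℝ} (f : X → X) {D : X → ℝ}
    (hf : ∀ x, D x ≠ 0 → dist x (f x) ≤ a)
    (h : CanTransport (pushforward f D)⁺ (pushforward f D)⁻ c) :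
    CanTransport D⁺ D⁻ (a * ∑ x, |D x| + c) := by
  have hpos : CanTransport D⁺ (pushforward f D⁺) (a * ∑ x, D⁺ x) := by
    simpa [pushforward_id] using canTransport_pushforward_pushforward id f (posPart_nonneg D)
      fun x hx => hf x fun h0 => hx (by simp [h0])
  have hneg : CanTransport (pushforward f D⁻) D⁻ (a * ∑ x, D⁻ x) := by
    simpa [pushforward_id] using canTransport_pushforward_pushforward f id (negPart_nonneg D)
      fun x hx => dist_comm x (f x) ▸ hf x fun h0 => hx (by simp [h0])
  have hmid : CanTransport (pushforward f D⁺) (pushforward f D⁻) c :=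
    .of_posPart_sub (pushforward_nonneg f (posPart_nonneg D))
      (pushforward_nonneg f (negPart_nonneg D)) (by rwa [← pushforward_sub, posPart_sub_negPart])
  refine ((hpos.trans hmid).trans hneg).mono (le_of_eq ?_)
  have habs : ∑ x, |D x| = ∑ x, D⁺ x + ∑ x, D⁻ x := by
    simp only [← sum_add_distrib, Pi.posPart_apply, Pi.negPart_apply, posPart_add_negPart]
  rw [habs]
  ring

lemma canTransport_posPart_negPart_pushforward (l r : ℤ) (π g : ℤ → X → X) (a : ℤ → ℝ)
    (hgs : ∀ i, l ≤ i → i < r → g (i + 1) = π (i + 1) ∘ g i)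
    (hds : ∀ i, l ≤ i → i < r → ∀ x, dist (g i x) (g (i + 1) x) ≤ a i)
    (hconst : ∃ z, ∀ x, g r x = z) {D : X → ℝ} (hD : ∑ x, D x = 0) (i : ℤ) (hli : l ≤ i)
    (hir : i ≤ r) :
    CanTransport (pushforward (g i) D)⁺ (pushforward (g i) D)⁻
      (∑ j ∈ Ico i r, a j * ∑ x, |pushforward (g j) D x|) := by
  induction i, hir using Int.leInductionDown with
  | base =>
    obtain ⟨z, hz⟩ := hconst
    simpa [pushforward_eq_zero_of_forall_eq hz hD] using canTransport_self (le_refl (0 : X → ℝ))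
  | pred n hnr ih =>
    have hg : g n = π n ∘ g (n - 1) := by simpa using hgs (n - 1) hli (by omega)
    have hπ : ∀ y, pushforward (g (n - 1)) D y ≠ 0 → dist y (π n y) ≤ a (n - 1) := by
      intro y hy
      obtain ⟨x, rfl⟩ := exists_apply_eq_of_pushforward_ne_zero hy
      have hx := hds (n - 1) hli (by omega) x
      rwa [sub_add_cancel, hg, Function.comp_apply] at hx
    rw [← insert_Ico_add_one_left_eq_Ico (by omega : n - 1 < r), sub_add_cancel,
      sum_insert (by simp)]
    refine CanTransport.of_pushforward (π n) hπ ?_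
    rw [← pushforward_comp, ← hg]
    exact ih (by omega)

end Hierarchy

theorem wasserstein_le_sum_l1_general
    {X : Type*} [MetricSpace X] [Fintype X] [DecidableEq X]
    (l r : ℤ) (hlr : l ≤ r) (π g : ℤ → X → X)
    (hgs : ∀ i : ℤ, l ≤ i → i < r → g (i + 1) = π (i + 1) ∘ g i)
    (hdl : ∀ x : X, dist x (g l x) ≤ (2 : ℝ) ^ l)
    (hds : ∀ i : ℤ, l ≤ i → i < r → ∀ x : X, dist (g i x) (g (i + 1) x) ≤ (2 : ℝ) ^ (i + 1))
    (hconst : ∃ z : X, ∀ x : X, g r x = z)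
    (p q : X → ℝ) (hp : IsProb p) (hq : IsProb q) :
    wassersteinDist (fun x y => dist x y) p q ≤
      (2 : ℝ) ^ l * l1Dist p q +
        ∑ i ∈ Finset.Icc l (r - 1),
          (2 : ℝ) ^ (i + 1) * l1Dist (pushforward (g i) p) (pushforward (g i) q) := by
  have hsum : ∑ x, (p - q) x = 0 := by simp [sum_sub_distrib, hp.2, hq.2]
  have hlevels :=
    canTransport_posPart_negPart_pushforward l r π g _ hgs hds hconst hsum l le_rfl hlr
  have hpq := CanTransport.of_posPart_sub hp.1 hq.1 <|
    hlevels.of_pushforward (g l) fun x _ => hdl x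
  refine (wassersteinDist_le_of_canTransport hpq).trans (le_of_eq ?_)
  simp [Icc_sub_one_right_eq_Ico, l1Dist, pushforward_sub]

/-- Hierarchical setup: if `d(x, g_l(x)) ≤ 2^l`, `d(g_i(x), g_{i+1}(x)) ≤ 2^(i+1)` for
`l ≤ i < r`, and `g_r` is constant, then
`W_d(p,q) ≤ 2^l·‖p−q‖₁ + ∑_{i=l}^{r−1} 2^(i+1)·‖g_i♯p − g_i♯q‖₁`. -/
theorem wasserstein_le_sum_l1
    {X : Type*} [MetricSpace X] [Fintype X] [Nonempty X] [DecidableEq X]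
    (l r : ℤ) (hlr : l ≤ r) (π g : ℤ → X → X)
    (hgl : g l = π l)
    (hgs : ∀ i : ℤ, l ≤ i → i < r → g (i + 1) = π (i + 1) ∘ g i)
    (hdl : ∀ x : X, dist x (g l x) ≤ (2 : ℝ) ^ l)
    (hds : ∀ i : ℤ, l ≤ i → i < r → ∀ x : X, dist (g i x) (g (i + 1) x) ≤ (2 : ℝ) ^ (i + 1))
    (hconst : ∃ z : X, ∀ x : X, g r x = z)
    (p q : X → ℝ) (hp : IsProb p) (hq : IsProb q) :
    wassersteinDist (fun x y => dist x y) p q ≤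
      (2 : ℝ) ^ l * l1Dist p q +
        ∑ i ∈ Finset.Icc l (r - 1),
          (2 : ℝ) ^ (i + 1) * l1Dist (pushforward (g i) p) (pushforward (g i) q) :=
  wasserstein_le_sum_l1_general l r hlr π g hgs hdl hds hconst p q hp hq
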